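/- arXiv:2502.00149 — 4 statements merged into one kernel-verified Lean document; each statement's English description precedes it below -/
import Mathlib

section
/- Let a₁ ≤ a₂ ≤ ... ≤ aₙ and g₁ ≤ g₂ ≤ ... ≤ gₙ be real numbers. For any permutation σ of {1,...,n} and any k ∈ {1,...,n}, the sum of the k largest values among |aᵢ - g_{σ(i)}| is at least the sum of the k largest values among |aᵢ - gᵢ|. That is, the identity (greedy left-to-right) matching minimizes the k-centrum cost. -/
/-!
If a matching crosses at `i < j`, i.e. `σ j < σ i`, uncrossing it (composing with the swap of
`i` and `j`) replaces the costs of agents `i` and `j` by a pair with no larger sum and no larger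
maximum, and such a replacement cannot increase the sum of the `k` largest costs. Uncrossing at
the smallest agent moved by `σ` fixes that agent and strictly shrinks the support of `σ`, so
finitely many uncrossings lead from `σ` to the identity.
-/

/-- The `k`-centrum value of `f`: the largest possible sum of `f` over a subset of size `k`
(i.e. the sum of the `k` largest values of `f`). -/
noncomputable def kSum (n k : ℕ) (f : Fin n → ℝ) : ℝ :=
  sSup {x : ℝ | ∃ S : Finset (Fin n), S.card = k ∧ x = ∑ i ∈ S, f i}

theorem abs_sub_add_abs_sub_le_of_le {x x' y y' : ℝ} (hx : x ≤ x') (hy : y ≤ y') :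
    |x - y| + |x' - y'| ≤ |x - y'| + |x' - y| := by
  rcases abs_cases (x - y) with h₁ | h₁ <;> rcases abs_cases (x' - y') with h₂ | h₂ <;>
    rcases abs_cases (x - y') with h₃ | h₃ <;> rcases abs_cases (x' - y) with h₄ | h₄ <;>
    linarith

theorem abs_sub_le_max_of_le {x x' y y' : ℝ} (hx : x ≤ x') (hy : y ≤ y') :
    |x - y| ≤ max |x - y'| |x' - y| := by
  rcases le_total x y with h | h
  · refine le_max_of_le_left ?_
    rw [abs_of_nonpos (by linarith), abs_of_nonpos (by linarith)]
    linarith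
  · refine le_max_of_le_right ?_
    rw [abs_of_nonneg (by linarith), abs_of_nonneg (by linarith)]
    linarith

theorem abs_sub_le_max_of_le' {x x' y y' : ℝ} (hx : x ≤ x') (hy : y ≤ y') :
    |x' - y'| ≤ max |x - y'| |x' - y| := by
  simpa only [neg_sub_neg, abs_sub_comm, max_comm] using
    abs_sub_le_max_of_le (neg_le_neg hx) (neg_le_neg hy)

theorem Equiv.Perm.exists_lt_card_support_mul_swap_lt {α : Type*} [LinearOrder α] [Fintype α]
    {σ : Equiv.Perm α} (hσ : σ ≠ 1) :
    ∃ i j, i < j ∧ σ j < σ i ∧ (σ * Equiv.swap i j).support.card < σ.support.card := by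
  have hne : σ.support.Nonempty := Finset.nonempty_iff_ne_empty.2 (mt support_eq_empty_iff.1 hσ)
  set i := σ.support.min' hne
  have hi : σ i ≠ i := mem_support.1 (σ.support.min'_mem hne)
  have lt_of_mem_support {p : α} (hp : p ∈ σ.support) (hpi : p ≠ i) : i < p :=
    lt_of_le_of_ne (σ.support.min'_le p hp) hpi.symm
  have hσi : i < σ i := lt_of_mem_support (apply_mem_support.2 (mem_support.2 hi)) hi
  have hσj : σ (σ⁻¹ i) = i := σ.apply_symm_apply i
  have hj : i < σ⁻¹ i := by
    have hji : σ⁻¹ i ≠ i := fun h => hi (by rwa [h] at hσj)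
    exact lt_of_mem_support (mem_support.2 (by rw [hσj]; exact hji.symm)) hji
  refine ⟨i, σ⁻¹ i, hj, by rwa [hσj], ?_⟩
  rw [mul_swap_eq_swap_mul, hσj, Equiv.swap_comm]
  exact card_support_swap_mul hi

section kSum

variable {n k : ℕ}

theorem sum_le_kSum (f : Fin n → ℝ) {T : Finset (Fin n)} (hT : T.card = k) :
    ∑ i ∈ T, f i ≤ kSum n k f := by
  refine le_csSup ?_ ⟨T, hT, rfl⟩
  refine ((Set.finite_range fun S : Finset (Fin n) => ∑ i ∈ S, f i).subset ?_).bddAbove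
  rintro x ⟨S, -, rfl⟩
  exact ⟨S, rfl⟩

theorem kSum_le_kSum_of_forall_exists (hk : k ≤ n) {f f' : Fin n → ℝ}
    (H : ∀ S : Finset (Fin n), S.card = k →
      ∃ T : Finset (Fin n), T.card = k ∧ ∑ i ∈ S, f' i ≤ ∑ i ∈ T, f i) :
    kSum n k f' ≤ kSum n k f := by
  obtain ⟨S₀, -, hS₀⟩ := Finset.exists_subset_card_eq (s := (Finset.univ : Finset (Fin n)))
    (by simpa using hk)
  refine csSup_le ⟨_, S₀, hS₀, rfl⟩ ?_
  rintro x ⟨S, hS, rfl⟩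
  obtain ⟨T, hT, hle⟩ := H S hS
  exact hle.trans (sum_le_kSum f hT)

theorem kSum_le_kSum_of_eqOn_compl (hk : k ≤ n) {f f' : Fin n → ℝ} (U : Finset (Fin n))
    (heq : ∀ i ∉ U, f' i = f i)
    (hU : ∀ W ⊆ U, ∃ V ⊆ U, V.card = W.card ∧ ∑ i ∈ W, f' i ≤ ∑ i ∈ V, f i) :
    kSum n k f' ≤ kSum n k f := by
  refine kSum_le_kSum_of_forall_exists hk fun S hS => ?_
  obtain ⟨V, hVU, hVcard, hVsum⟩ := hU (S ∩ U) Finset.inter_subset_right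
  have hdisj : Disjoint (S \ U) V := Finset.disjoint_of_subset_right hVU Finset.sdiff_disjoint
  refine ⟨S \ U ∪ V, ?_, ?_⟩
  · rw [Finset.card_union_of_disjoint hdisj, hVcard, Finset.card_sdiff_add_card_inter, hS]
  · rw [Finset.sum_union hdisj, ← Finset.sum_inter_add_sum_sdiff S U,
      Finset.sum_congr rfl fun i hi => heq i (Finset.mem_sdiff.1 hi).2]
    linarith

theorem kSum_le_kSum_of_pair (hk : k ≤ n) {f f' : Fin n → ℝ} {i j : Fin n} (hij : i ≠ j)
    (heq : ∀ p, p ≠ i → p ≠ j → f' p = f p) (hsum : f' i + f' j ≤ f i + f j)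
    (hi : f' i ≤ max (f i) (f j)) (hj : f' j ≤ max (f i) (f j)) :
    kSum n k f' ≤ kSum n k f := by
  refine kSum_le_kSum_of_eqOn_compl hk {i, j} (fun p hp => ?_) fun W hW => ?_
  · simp only [Finset.mem_insert, Finset.mem_singleton, not_or] at hp
    exact heq p hp.1 hp.2
  obtain ⟨m, hm, hmax⟩ : ∃ m ∈ ({i, j} : Finset (Fin n)), f m = max (f i) (f j) := by
    rcases le_total (f i) (f j) with h | h
    · exact ⟨j, by simp, (max_eq_right h).symm⟩
    · exact ⟨i, by simp, (max_eq_left h).symm⟩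
  have hcard : W.card ≤ 2 := (Finset.card_le_card hW).trans (Finset.card_pair hij).le
  interval_cases hW₂ : W.card
  · exact ⟨∅, Finset.empty_subset _, by simp_all⟩
  · obtain ⟨p, rfl⟩ := Finset.card_eq_one.1 hW₂
    refine ⟨{m}, Finset.singleton_subset_iff.2 hm, rfl, ?_⟩
    have hp : p = i ∨ p = j := by simpa using hW
    rcases hp with rfl | rfl <;> simpa only [Finset.sum_singleton, hmax]
  · have hWij : W = {i, j} :=
      Finset.eq_of_subset_of_card_le hW (by rw [Finset.card_pair hij, hW₂])
    subst hWij
    exact ⟨{i, j}, subset_rfl, Finset.card_pair hij, by simpa only [Finset.sum_pair hij]⟩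

theorem kSum_abs_sub_comp_mul_swap_le (hk : k ≤ n) {a g : Fin n → ℝ} (ha : Monotone a)
    (hg : Monotone g) (σ : Equiv.Perm (Fin n)) {i j : Fin n} (hij : i < j) (hσ : σ j < σ i) :
    kSum n k (fun p => |a p - g ((σ * Equiv.swap i j) p)|) ≤
      kSum n k (fun p => |a p - g (σ p)|) := by
  have hx : a i ≤ a j := ha hij.le
  have hy : g (σ j) ≤ g (σ i) := hg hσ.le
  apply kSum_le_kSum_of_pair hk hij.ne
  · intro p hpi hpj
    rw [Equiv.Perm.mul_apply, Equiv.swap_apply_of_ne_of_ne hpi hpj]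
  all_goals simp only [Equiv.Perm.mul_apply, Equiv.swap_apply_left, Equiv.swap_apply_right]
  · exact abs_sub_add_abs_sub_le_of_le hx hy
  · exact abs_sub_le_max_of_le hx hy
  · exact abs_sub_le_max_of_le' hx hy

end kSum

theorem stmt_0_general (n : ℕ) (a g : Fin n → ℝ) (ha : Monotone a) (hg : Monotone g)
    (σ : Equiv.Perm (Fin n)) (k : ℕ) (hkn : k ≤ n) :
    kSum n k (fun i => |a i - g i|) ≤ kSum n k (fun i => |a i - g (σ i)|) := by
  induction hs : σ.support.card using Nat.strong_induction_on generalizing σ with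
  | _ m ih =>
    by_cases hσ : σ = 1
    · subst hσ
      rfl
    obtain ⟨i, j, hij, hσij, hlt⟩ := σ.exists_lt_card_support_mul_swap_lt hσ
    calc kSum n k (fun p => |a p - g p|)
        ≤ kSum n k (fun p => |a p - g ((σ * Equiv.swap i j) p)|) := ih _ (hs ▸ hlt) _ rfl
      _ ≤ kSum n k (fun p => |a p - g (σ p)|) :=
        kSum_abs_sub_comp_mul_swap_le hkn ha hg σ hij hσij

/-- The identity (greedy left-to-right) matching minimizes the k-centrum cost. -/
theorem stmt_0 (n : ℕ) (a g : Fin n → ℝ) (ha : Monotone a) (hg : Monotone g)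
    (σ : Equiv.Perm (Fin n)) (k : ℕ) (hk1 : 1 ≤ k) (hkn : k ≤ n) :
    kSum n k (fun i => |a i - g i|) ≤ kSum n k (fun i => |a i - g (σ i)|) :=
  stmt_0_general n a g ha hg σ k hkn
end

section
/- Let a₁ ≤ a₂ ≤ ... ≤ aₙ and g₁ ≤ g₂ ≤ ... ≤ gₙ be real numbers. For any permutation σ of {1,...,n}, max_i |aᵢ - g_{σ(i)}| ≥ max_i |aᵢ - gᵢ|. That is, the identity matching minimizes the egalitarian (maximum) cost. -/
/-- The identity matching minimizes the egalitarian (maximum) cost. -/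
theorem stmt_2 (n : ℕ) (hn : 0 < n) (a g : Fin n → ℝ) (ha : Monotone a) (hg : Monotone g)
    (σ : Equiv.Perm (Fin n)) :
    Finset.univ.sup' (Finset.univ_nonempty_iff.mpr ⟨⟨0, hn⟩⟩) (fun i => |a i - g i|) ≤
      Finset.univ.sup' (Finset.univ_nonempty_iff.mpr ⟨⟨0, hn⟩⟩) (fun i => |a i - g (σ i)|) := by
  apply Finset.sup'_le
  intro i _
  rcases le_or_gt (a i) (g i) with hc | hc
  · -- find j with j ≤ i ≤ σ j
    have hex : ∃ j : Fin n, j ≤ i ∧ i ≤ σ j := by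
      by_contra h
      push_neg at h
      have hmap : ∀ j ∈ Finset.Iic i, σ j ∈ Finset.Iio i := by
        intro j hj
        simp only [Finset.mem_Iic] at hj
        simpa [Finset.mem_Iio] using h j hj
      have hcard := Finset.card_le_card_of_injOn σ hmap (σ.injective.injOn)
      rw [Fin.card_Iic, Fin.card_Iio] at hcard
      omega
    obtain ⟨j, hji, hij⟩ := hex
    refine le_trans ?_ (Finset.le_sup' (fun i => |a i - g (σ i)|) (Finset.mem_univ j))
    have h1 : a j ≤ a i := ha hji
    have h2 : g i ≤ g (σ j) := hg hij
    rw [abs_sub_comm (a i), abs_of_nonneg (by linarith), abs_sub_comm,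
      abs_of_nonneg (by linarith)]
    linarith
  · -- find j with σ j ≤ i ≤ j
    have hex : ∃ j : Fin n, i ≤ j ∧ σ j ≤ i := by
      by_contra h
      push_neg at h
      have hmap : ∀ j ∈ Finset.Ici i, σ j ∈ Finset.Ioi i := by
        intro j hj
        simp only [Finset.mem_Ici] at hj
        simpa [Finset.mem_Ioi] using h j hj
      have hcard := Finset.card_le_card_of_injOn σ hmap (σ.injective.injOn)
      rw [Fin.card_Ici, Fin.card_Ioi] at hcard
      have := i.isLt
      omega
    obtain ⟨j, hij, hji⟩ := hex
    refine le_trans ?_ (Finset.le_sup' (fun i => |a i - g (σ i)|) (Finset.mem_univ j))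
    have h1 : a i ≤ a j := ha hij
    have h2 : g (σ j) ≤ g i := hg hji
    rw [abs_of_nonneg (by linarith), abs_of_nonneg (by linarith)]
    linarith
end

section
/- Let σ be a permutation of Fin n, let c : Fin n → ℝ≥0 be costs, and suppose that for every i, the value w(i) := cost of edge (i, σ(i)) satisfies w(i) ≤ c(i) + 2·c(σ(i)). Then for every k ∈ {1,...,n}, the sum of the k largest values of w is at most 3 times the sum of the k largest values of c. -/
lemma kSum_finite (n k : ℕ) (f : Fin n → ℝ) :
    {x : ℝ | ∃ S : Finset (Fin n), S.card = k ∧ x = ∑ i ∈ S, f i}.Finite := by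
  have : {x : ℝ | ∃ S : Finset (Fin n), S.card = k ∧ x = ∑ i ∈ S, f i}
      ⊆ (fun S : Finset (Fin n) => ∑ i ∈ S, f i) '' Set.univ := by
    rintro x ⟨S, _, rfl⟩
    exact ⟨S, trivial, rfl⟩
  exact (Set.finite_univ.image _).subset this

lemma le_kSum (n k : ℕ) (f : Fin n → ℝ) (S : Finset (Fin n)) (hS : S.card = k) :
    ∑ i ∈ S, f i ≤ kSum n k f :=
  le_csSup (kSum_finite n k f).bddAbove ⟨S, hS, rfl⟩

/-- If every edge cost satisfies `w i ≤ c i + 2 c (σ i)`, the sum of the `k` largest edge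
costs is at most three times the sum of the `k` largest agent costs. -/
theorem stmt_8 (n : ℕ) (σ : Equiv.Perm (Fin n)) (c w : Fin n → ℝ)
    (hc : ∀ i, 0 ≤ c i) (hw : ∀ i, 0 ≤ w i)
    (hbound : ∀ i, w i ≤ c i + 2 * c (σ i))
    (k : ℕ) (hk1 : 1 ≤ k) (hkn : k ≤ n) :
    kSum n k w ≤ 3 * kSum n k c := by
  apply csSup_le
  · obtain ⟨S, _, hScard⟩ := Finset.exists_subset_card_eq
      (s := (Finset.univ : Finset (Fin n))) (by simpa using hkn)
    exact ⟨_, S, hScard, rfl⟩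
  · rintro x ⟨S, hScard, rfl⟩
    have h1 : ∑ i ∈ S, w i ≤ ∑ i ∈ S, c i + 2 * ∑ i ∈ S, c (σ i) := by
      rw [Finset.mul_sum, ← Finset.sum_add_distrib]
      exact Finset.sum_le_sum fun i _ => hbound i
    have h2 : ∑ i ∈ S, c (σ i) = ∑ j ∈ S.image σ, c j := by
      rw [Finset.sum_image (fun a _ b _ h => σ.injective h)]
    have hcard : (S.image σ).card = k := by
      rw [Finset.card_image_of_injective _ σ.injective, hScard]
    have hA := le_kSum n k c S hScard
    have hB := le_kSum n k c (S.image σ) hcard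
    nlinarith [h1, h2, hA, hB]
end

section
/- Let b ∈ ℝ be an item and A ⊆ ℝ a finite set of agent positions such that for every a ∈ A and every item g in a finite set G ⊆ ℝ with b ∈ G, |a - b| ≥ |a - g| (b is every agent's least-preferred item). If |G| ≥ 2 and each agent has a favorite item distinct from b, then all agents lie on the same side of b (weakly), i.e., either a ≤ b for all a ∈ A or a ≥ b for all a ∈ A. -/
/-- If every agent ranks item `b` (weakly) last and every agent has a favorite item
distinct from `b`, then all agents lie weakly on the same side of `b`. -/
theorem stmt_12 (A G : Finset ℝ) (b : ℝ) (hbG : b ∈ G) (hG2 : 2 ≤ G.card)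
    (hleast : ∀ a ∈ A, ∀ g ∈ G, |a - g| ≤ |a - b|)
    (hfav : ∀ a ∈ A, ∃ g ∈ G, g ≠ b ∧ ∀ g' ∈ G, |a - g| ≤ |a - g'|) :
    (∀ a ∈ A, a ≤ b) ∨ (∀ a ∈ A, b ≤ a) := by
  by_contra h
  push_neg at h
  obtain ⟨⟨a, ha, hab⟩, ⟨a', ha', ha'b⟩⟩ := h
  have hsub : ∀ g ∈ G, g = b := by
    intro g hg
    have h1 := hleast a ha g hg
    have h2 := hleast a' ha' g hg
    rw [abs_of_pos (by linarith : (0:ℝ) < a - b)] at h1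
    rw [abs_of_neg (by linarith : a' - b < 0)] at h2
    have e1 := abs_le.mp h1
    have e2 := abs_le.mp h2
    linarith [e1.2, e2.1]
  have hs : G ⊆ {b} := fun g hg => Finset.mem_singleton.mpr (hsub g hg)
  have := Finset.card_le_card hs
  simp at this
  omega
end
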